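/- For any k,l ≥ 1 the equation [[x_1,…,x_k],[x_{k+1},…,x_{k+l}]] = ∑_{σ∈C_{k,l}} [x_{σ(1)},…,x_{σ(k+l)}] holds in the free associative ring ℤ⟨x_1,…,x_{k+l}⟩ with the commutator bracket, where all brackets on the right-hand side are left-normed. -/

import Mathlib

/-!
Write `X = [x₁, …, x_k]` and `Y = [y₀, y₁, …, y_m]` with `yⱼ = x_{k+1+j}` and `l = m + 1`.
Peeling off the last letter of `Y` with `[A, [B, w]] = [[A, B], w] - [[A, w], B]` expands
`[X, Y]` as `∑_S (-1)^|S| [X, y_{s_r}, …, y_{s_1}, y₀, y_{t_1}, …, y_{t_q}]` over the subsets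
`S = {s_1 < ⋯ < s_r}` of `{1, …, m}`, with complement `{t_1 < ⋯ < t_q}`. A shuffle
`(α, β) ∈ Sh¹(l - i, i)` is the same thing as such a subset of size `i` (`β` enumerates `S` and
`α` enumerates `{0} ∪ Sᶜ`), `σ̃_{α,β,k,l}` spells out exactly the corresponding word, and the
factor `(1,2)^i` swaps its first two letters, producing the sign `(-1)^i`. Finally
`σ_{α,β,k,l}` determines `(i, α, β)`: it puts `y₀` in position `k + i + 1`, which gives `i`
and then `σ̃`.
-/

/-- The left-normed Lie bracket `[a₁,…,aₘ]` of a list of elements of a Lie ring,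
defined by `[a₁] = a₁` and `[a₁,…,aₘ] = [[a₁,…,a_{m-1}], aₘ]` (and `0` for the empty list). -/
def lieWord {L : Type*} [LieRing L] : List L → L
  | [] => 0
  | x :: xs => xs.foldl (fun a b => ⁅a, b⁆) x

/-- An `(s,t)`-shuffle `(α,β)` with `α(1) = 1`: a pair of strictly increasing maps
`α : {1,…,s} → {1,…,s+t}`, `β : {1,…,t} → {1,…,s+t}` with disjoint images and `α(1) = 1`
(everything 0-indexed, so the last condition reads `α 0 = 0`).  This is the set `Sh¹(s,t)`. -/
structure Shuffle1 (s t : ℕ) where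
  α : Fin s → Fin (s + t)
  β : Fin t → Fin (s + t)
  mono_alpha : StrictMono α
  mono_beta : StrictMono β
  disj : ∀ i j, α i ≠ β j
  first : ∀ hs : 0 < s, α ⟨0, hs⟩ = ⟨0, Nat.lt_of_lt_of_le hs (Nat.le_add_right s t)⟩

/-- The underlying function of the permutation `σ̃_{α,β,k,l} ∈ S_{k+l}`: it fixes `1,…,k` and
sends `k+1,…,k+i, k+i+1,…,k+l` to `k+β(i),…,k+β(1), k+α(1),…,k+α(l−i)` (here 0-indexed). -/
def sigmaTildeFun (k l i : ℕ) (hi : i < l) (sh : Shuffle1 (l - i) i) :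
    Fin (k + l) → Fin (k + l) := fun x =>
  if hx : (x : ℕ) < k then x
  else if hx2 : (x : ℕ) < k + i then
    have j := sh.β ⟨i - 1 - ((x : ℕ) - k), by omega⟩
    ⟨k + (j : ℕ), by have := j.isLt; omega⟩
  else
    have j := sh.α ⟨(x : ℕ) - k - i, by have := x.isLt; omega⟩
    ⟨k + (j : ℕ), by have := j.isLt; omega⟩

/-- The transposition `(1,2) ∈ Sₙ` (0-indexed: it swaps `0` and `1`), for `n ≥ 2`. -/
def swap01 (n : ℕ) : Equiv.Perm (Fin n) :=
  if h : 2 ≤ n then Equiv.swap ⟨0, by omega⟩ ⟨1, by omega⟩ else 1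

/-- The set `C_{k,l} = {σ_{α,β,k,l} = σ̃_{α,β,k,l} ∘ (1,2)^i : 0 ≤ i ≤ l−1, (α,β) ∈ Sh¹(l−i,i)}`
as a subset of `S_{k+l}`. -/
def Cset (k l : ℕ) : Set (Equiv.Perm (Fin (k + l))) :=
  { σ | ∃ (i : ℕ) (hi : i < l) (sh : Shuffle1 (l - i) i),
      ∀ x, σ x = sigmaTildeFun k l i hi sh ((swap01 (k + l) ^ i) x) }

attribute [local instance 100] LieRing.ofAssociativeRing

theorem List.filter_finRange_succ_last {m : ℕ} (p : Fin (m + 1) → Bool) :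
    (List.finRange (m + 1)).filter p =
      ((List.finRange m).filter (fun j => p j.castSucc)).map Fin.castSucc ++
        (if p (Fin.last m) then [Fin.last m] else []) := by
  rw [List.finRange_succ_last, List.filter_append, List.filter_map]
  cases h : p (Fin.last m) <;> simp [h, Function.comp_def]

theorem List.pairwise_lt_map_succ_filter_finRange {m : ℕ} (p : Fin m → Bool) :
    (((List.finRange m).filter p).map (·.val + 1)).Pairwise (· < ·) :=
  List.pairwise_map.mpr
    (((List.pairwise_lt_finRange m).sublist List.filter_sublist).imp Nat.succ_lt_succ)

section MaskWord

variable {α : Type*}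

def maskWord {m : ℕ} (w : Fin m → α) (z : α) (g : Fin m → Bool) : List α :=
  ((List.finRange m).filter g).reverse.map w ++ z :: ((List.finRange m).filter (!g ·)).map w

theorem map_maskWord {β : Type*} {m : ℕ} (f : α → β) (w : Fin m → α) (z : α) (g : Fin m → Bool) :
    (maskWord w z g).map f = maskWord (f ∘ w) (f z) g := by
  simp [maskWord]

theorem maskWord_snoc_true {m : ℕ} (w : Fin (m + 1) → α) (z : α) (g : Fin m → Bool) :
    maskWord w z (Fin.snoc g true) = w (Fin.last m) :: maskWord (fun j => w j.castSucc) z g := by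
  simp [maskWord, List.filter_finRange_succ_last, Function.comp_def]

theorem maskWord_snoc_false {m : ℕ} (w : Fin (m + 1) → α) (z : α) (g : Fin m → Bool) :
    maskWord w z (Fin.snoc g false) = maskWord (fun j => w j.castSucc) z g ++ [w (Fin.last m)] := by
  simp [maskWord, List.filter_finRange_succ_last, Function.comp_def]

end MaskWord

section LieFold

variable {L : Type*} [LieRing L]

def lieFold (a : L) (xs : List L) : L := xs.foldl (⁅·, ·⁆) a

@[simp] theorem lieFold_nil (a : L) : lieFold a [] = a := rfl

@[simp] theorem lieFold_cons (a x : L) (xs : List L) : lieFold a (x :: xs) = lieFold ⁅a, x⁆ xs :=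
  rfl

theorem lieFold_append (a : L) (xs ys : List L) :
    lieFold a (xs ++ ys) = lieFold (lieFold a xs) ys :=
  List.foldl_append

theorem lieFold_concat (a y : L) (xs : List L) : lieFold a (xs ++ [y]) = ⁅lieFold a xs, y⁆ := by
  rw [lieFold_append, lieFold_cons, lieFold_nil]

theorem lieFold_neg (a : L) (xs : List L) : lieFold (-a) xs = -lieFold a xs := by
  induction xs generalizing a with
  | nil => rfl
  | cons x xs ih => rw [lieFold_cons, lieFold_cons, neg_lie, ih]

theorem lieWord_cons (x : L) (xs : List L) : lieWord (x :: xs) = lieFold x xs := rfl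

theorem lieWord_append {xs : List L} (hxs : xs ≠ []) (ys : List L) :
    lieWord (xs ++ ys) = lieFold (lieWord xs) ys := by
  obtain ⟨x, xs, rfl⟩ := List.exists_cons_of_ne_nil hxs
  rw [List.cons_append, lieWord_cons, lieWord_cons, lieFold_append]

theorem lieWord_swap (a b : L) (xs : List L) :
    lieWord (b :: a :: xs) = -lieWord (a :: b :: xs) := by
  simp only [lieWord_cons, lieFold_cons, ← lie_skew a b, lieFold_neg, neg_neg]

theorem lieWord_ofFn_comp_swap01 {n : ℕ} (hn : 2 ≤ n) (u : Fin n → L) :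
    lieWord (List.ofFn fun p => u (swap01 n p)) = -lieWord (List.ofFn u) := by
  obtain ⟨n, rfl⟩ : ∃ n', n = n' + 2 := ⟨n - 2, by omega⟩
  rw [swap01, dif_pos hn]
  simp only [List.ofFn_succ]
  rw [← lieWord_swap]
  congr 3

theorem lieWord_ofFn_comp_swap01_pow {n : ℕ} (hn : 2 ≤ n) (u : Fin n → L) (i : ℕ) :
    lieWord (List.ofFn fun p => u ((swap01 n ^ i) p)) = (-1 : ℤ) ^ i • lieWord (List.ofFn u) := by
  induction i with
  | zero => simp
  | succ i ih =>
    simp only [pow_succ, Equiv.Perm.mul_apply]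
    rw [lieWord_ofFn_comp_swap01 hn (fun p => u ((swap01 n ^ i) p)), ih, mul_comm, mul_smul,
      neg_one_smul]

theorem lie_lieFold_eq_sum {m : ℕ} (A z : L) (w : Fin m → L) :
    ⁅A, lieFold z (List.ofFn w)⁆ =
      ∑ g : Fin m → Bool,
        (-1 : ℤ) ^ ((List.finRange m).filter g).length • lieFold A (maskWord w z g) := by
  induction m generalizing A with
  | zero => simp [maskWord]
  | succ m ih =>
    set Y := lieFold z (List.ofFn fun j => w j.castSucc)
    have hsplit : ∀ F : (Fin (m + 1) → Bool) → L,
        ∑ g, F g = ∑ g, (F (Fin.snoc g false) + F (Fin.snoc g true)) := fun F => by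
      rw [← (Fin.snocEquiv fun _ => Bool).sum_comp, Fintype.sum_prod_type, Fintype.sum_bool,
        ← Finset.sum_add_distrib]
      exact Finset.sum_congr rfl fun g _ => add_comm _ _
    calc ⁅A, lieFold z (List.ofFn w)⁆ = ⁅⁅A, Y⁆, w (Fin.last m)⁆ - ⁅⁅A, w (Fin.last m)⁆, Y⁆ := by
          rw [List.ofFn_succ', List.concat_eq_append, lieFold_concat, leibniz_lie, ← lie_skew Y,
            sub_eq_add_neg]
      _ = _ := by
          rw [ih, ih, sum_lie, ← Finset.sum_sub_distrib, hsplit]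
          refine Finset.sum_congr rfl fun g _ => ?_
          simp only [maskWord_snoc_true, maskWord_snoc_false, List.filter_finRange_succ_last,
            Fin.snoc_castSucc, Fin.snoc_last, zsmul_lie, lieFold_concat, lieFold_cons]
          simp [pow_succ, sub_eq_add_neg]

end LieFold

namespace Shuffle1

variable {s t : ℕ}

theorem ext {a b : Shuffle1 s t} (hα : a.α = b.α) (hβ : a.β = b.β) : a = b := by
  cases a; cases b; cases hα; cases hβ; rfl

instance : Finite (Shuffle1 s t) :=
  Finite.of_injective (fun sh => (sh.α, sh.β)) fun _ _ h =>
    ext (congrArg Prod.fst h) (congrArg Prod.snd h)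

def αList (sh : Shuffle1 s t) : List ℕ := List.ofFn fun u => (sh.α u : ℕ)

def βList (sh : Shuffle1 s t) : List ℕ := List.ofFn fun u => (sh.β u : ℕ)

def mask (m : ℕ) (sh : Shuffle1 s t) : Fin m → Bool := fun j => decide (∃ u, (sh.β u : ℕ) = j + 1)

theorem ext_list {a b : Shuffle1 s t} (hα : a.αList = b.αList) (hβ : a.βList = b.βList) :
    a = b := by
  rw [αList, αList, List.ofFn_inj] at hα
  rw [βList, βList, List.ofFn_inj] at hβ
  exact ext (funext fun u => Fin.ext (congrFun hα u)) (funext fun u => Fin.ext (congrFun hβ u))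

theorem exists_αList_βList_eq {A B : List ℕ} (hAs : A.length = s) (hBt : B.length = t)
    (hA : A.Pairwise (· < ·)) (hB : B.Pairwise (· < ·)) (hAB : A.Disjoint B)
    (hlt : ∀ x ∈ A ++ B, x < s + t) (hA0 : ∀ h : 0 < A.length, A[0] = 0) :
    ∃ sh : Shuffle1 s t, sh.αList = A ∧ sh.βList = B := by
  subst hAs hBt
  refine ⟨{ α := fun u => ⟨A[u.val], hlt _ (List.mem_append_left B (List.getElem_mem _))⟩
            β := fun u => ⟨B[u.val], hlt _ (List.mem_append_right A (List.getElem_mem _))⟩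
            mono_alpha := fun u v huv => List.pairwise_iff_getElem.mp hA _ _ _ _ huv
            mono_beta := fun u v huv => List.pairwise_iff_getElem.mp hB _ _ _ _ huv
            disj := fun u v h =>
              hAB (List.getElem_mem _) ((Fin.mk.inj_iff.mp h).symm ▸ List.getElem_mem _)
            first := fun hs => Fin.ext (hA0 hs) }, ?_, ?_⟩ <;>
    simp [αList, βList]

variable (sh : Shuffle1 s t)

@[simp] theorem length_αList : sh.αList.length = s := List.length_ofFn

@[simp] theorem length_βList : sh.βList.length = t := List.length_ofFn

theorem mem_αList {x : ℕ} : x ∈ sh.αList ↔ ∃ u, (sh.α u : ℕ) = x := List.mem_ofFn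

theorem mem_βList {x : ℕ} : x ∈ sh.βList ↔ ∃ u, (sh.β u : ℕ) = x := List.mem_ofFn

theorem pairwise_αList : sh.αList.Pairwise (· < ·) :=
  List.pairwise_ofFn.mpr fun _ _ h => sh.mono_alpha h

theorem pairwise_βList : sh.βList.Pairwise (· < ·) :=
  List.pairwise_ofFn.mpr fun _ _ h => sh.mono_beta h

theorem disjoint_αList_βList : sh.αList.Disjoint sh.βList := by
  intro x hα hβ
  obtain ⟨u, rfl⟩ := sh.mem_αList.mp hα
  obtain ⟨v, hv⟩ := sh.mem_βList.mp hβ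
  exact sh.disj u v (Fin.ext hv.symm)

theorem mask_apply (m : ℕ) (j : Fin m) : sh.mask m j = decide (j.val + 1 ∈ sh.βList) := by
  simp [mask, mem_βList]

theorem val_β_ne_zero (hs : 0 < s) (u : Fin t) : (sh.β u : ℕ) ≠ 0 := fun h =>
  sh.disj ⟨0, hs⟩ u (Fin.ext (by rw [sh.first hs, h]))

theorem exists_α_iff (x : ℕ) :
    (∃ u, (sh.α u : ℕ) = x) ↔ x < s + t ∧ ¬∃ u, (sh.β u : ℕ) = x := by
  have hbij : Function.Bijective (Sum.elim sh.α sh.β) :=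
    (Fintype.bijective_iff_injective_and_card _).mpr
      ⟨sh.mono_alpha.injective.sumElim sh.mono_beta.injective sh.disj, by simp⟩
  constructor
  · rintro ⟨u, rfl⟩
    exact ⟨(sh.α u).isLt, fun ⟨v, hv⟩ => sh.disj u v (Fin.ext hv.symm)⟩
  · rintro ⟨hx, hβ⟩
    obtain ⟨u | u, hu⟩ := hbij.surjective ⟨x, hx⟩
    · exact ⟨u, congrArg Fin.val hu⟩
    · exact absurd ⟨u, congrArg Fin.val hu⟩ hβ

section Mask

variable {m : ℕ} (hs : 0 < s) (hst : s + t = m + 1)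
include hs hst

theorem βList_eq_map_filter_mask :
    sh.βList = ((List.finRange m).filter (sh.mask m)).map (·.val + 1) := by
  refine sh.pairwise_βList.eq_of_mem_iff (List.pairwise_lt_map_succ_filter_finRange _) fun x => ?_
  simp only [mem_βList, List.mem_map, List.mem_filter, List.mem_finRange, true_and, mask,
    decide_eq_true_eq]
  constructor
  · rintro ⟨u, rfl⟩
    have := sh.val_β_ne_zero hs u
    have := (sh.β u).isLt
    exact ⟨⟨sh.β u - 1, by omega⟩, ⟨u, by simp; omega⟩, by simp; omega⟩
  · rintro ⟨j, hj, rfl⟩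
    exact hj

theorem αList_eq_map_filter_mask :
    sh.αList = 0 :: ((List.finRange m).filter (!sh.mask m ·)).map (·.val + 1) := by
  refine sh.pairwise_αList.eq_of_mem_iff
    (List.pairwise_cons.mpr ⟨by simp, List.pairwise_lt_map_succ_filter_finRange _⟩) fun x => ?_
  simp only [mem_αList, exists_α_iff, List.mem_cons, List.mem_map, List.mem_filter,
    List.mem_finRange, true_and, mask, Bool.not_eq_true', decide_eq_false_iff_not]
  constructor
  · rintro ⟨hx, hβ⟩
    rcases Nat.eq_zero_or_pos x with rfl | hx0
    · exact Or.inl rfl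
    · exact Or.inr ⟨⟨x - 1, by omega⟩, by simpa [Nat.sub_add_cancel hx0] using hβ, by simp; omega⟩
  · rintro (rfl | ⟨j, hj, rfl⟩)
    · exact ⟨by omega, fun ⟨u, hu⟩ => sh.val_β_ne_zero hs u hu⟩
    · exact ⟨by omega, hj⟩

theorem length_filter_mask : ((List.finRange m).filter (sh.mask m)).length = t := by
  simpa using congrArg List.length (sh.βList_eq_map_filter_mask hs hst).symm

end Mask

end Shuffle1

section SigmaTilde

variable {k l i : ℕ} (hi : i < l) (sh : Shuffle1 (l - i) i)

theorem sigmaTildeFun_castAdd (j : Fin k) :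
    sigmaTildeFun k l i hi sh (Fin.castAdd l j) = Fin.castAdd l j := by
  simp [sigmaTildeFun]

theorem ofFn_val_sigmaTildeFun_natAdd :
    List.ofFn (fun q : Fin l => (sigmaTildeFun k l i hi sh (Fin.natAdd k q) : ℕ)) =
      (sh.βList.reverse ++ sh.αList).map (k + ·) := by
  refine List.ext_getElem (by simp; omega) fun q hq _ => ?_
  simp only [List.length_ofFn] at hq
  by_cases hqi : q < i
  · simp [sigmaTildeFun, hqi, Shuffle1.βList, List.getElem_append_left]
  · rw [List.getElem_map, List.getElem_append_right (by simp; omega)]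
    simp [sigmaTildeFun, hqi, Shuffle1.αList]

theorem sigmaTildeFun_injective : Function.Injective (sigmaTildeFun k l i hi sh) := by
  have hword : (sh.βList.reverse ++ sh.αList).Nodup :=
    List.nodup_append.mpr ⟨List.nodup_reverse.mpr sh.pairwise_βList.nodup, sh.pairwise_αList.nodup,
      fun a ha b hb hab => sh.disjoint_αList_βList hb (hab ▸ List.mem_reverse.mp ha)⟩
  have hfix : (List.ofFn fun j : Fin k => (sigmaTildeFun k l i hi sh (j.castLE (by omega)) : ℕ))
      = List.ofFn fun j => (j : ℕ) :=
    List.ofFn_inj.mpr (funext fun j => congrArg Fin.val (sigmaTildeFun_castAdd hi sh j))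
  have hnd : (List.ofFn fun x => (sigmaTildeFun k l i hi sh x : ℕ)).Nodup := by
    rw [List.ofFn_add, ofFn_val_sigmaTildeFun_natAdd, hfix]
    refine List.nodup_append.mpr
      ⟨List.nodup_ofFn.mpr Fin.val_injective, hword.map (add_right_injective k), ?_⟩
    simp only [List.mem_ofFn, List.mem_map]
    rintro _ ⟨a, rfl⟩ _ ⟨b, _, rfl⟩
    omega
  exact (List.nodup_ofFn.mp hnd).of_comp

end SigmaTilde

theorem ofFn_sigmaTildeFun_natAdd {k m i : ℕ} (hi : i < m + 1) (sh : Shuffle1 (m + 1 - i) i) :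
    List.ofFn (fun q : Fin (m + 1) => sigmaTildeFun k (m + 1) i hi sh (Fin.natAdd k q)) =
      maskWord (fun j : Fin m => Fin.natAdd k j.succ) (Fin.natAdd k 0) (sh.mask m) := by
  apply List.map_injective_iff.mpr Fin.val_injective
  rw [List.map_ofFn, Function.comp_def, ofFn_val_sigmaTildeFun_natAdd,
    sh.βList_eq_map_filter_mask (m := m) (by omega) (by omega),
    sh.αList_eq_map_filter_mask (m := m) (by omega) (by omega)]
  simp [maskWord, Function.comp_def]

abbrev CsetIndex (l : ℕ) : Type := (i : Fin l) × Shuffle1 (l - i) i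

/-- The permutation `σ_{α,β,k,l}` of `t = (i, (α, β))`. -/
noncomputable def cPerm (k l : ℕ) (t : CsetIndex l) : Equiv.Perm (Fin (k + l)) :=
  (swap01 (k + l) ^ (t.1 : ℕ)).trans
    (Equiv.ofBijective _ (sigmaTildeFun_injective t.1.isLt t.2).bijective_of_finite)

theorem cPerm_apply (k l : ℕ) (t : CsetIndex l) (x : Fin (k + l)) :
    cPerm k l t x = sigmaTildeFun k l t.1 t.1.isLt t.2 ((swap01 (k + l) ^ (t.1 : ℕ)) x) :=
  rfl

theorem Cset_eq_range (k l : ℕ) : Cset k l = Set.range (cPerm k l) := by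
  ext σ
  constructor
  · rintro ⟨i, hi, sh, hσ⟩
    exact ⟨⟨⟨i, hi⟩, sh⟩, Equiv.ext fun x => (hσ x).symm⟩
  · rintro ⟨t, rfl⟩
    exact ⟨t.1, t.1.isLt, t.2, cPerm_apply k l t⟩

/-- `(1,2)^i` fixes `k + i` (which is `≥ 2` unless `i = 0`) and `σ̃` sends it to `k + α 0 = k`. -/
theorem cPerm_apply_pivot {k l i : ℕ} (hk : 1 ≤ k) (hi : i < l) (sh : Shuffle1 (l - i) i) :
    cPerm k l ⟨⟨i, hi⟩, sh⟩ ⟨k + i, by omega⟩ = ⟨k, by omega⟩ := by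
  have hfix : (swap01 (k + l) ^ i) ⟨k + i, by omega⟩ = ⟨k + i, by omega⟩ := by
    rcases Nat.eq_zero_or_pos i with rfl | hi0
    · rfl
    · refine Equiv.Perm.pow_apply_eq_self_of_apply_eq_self ?_ i
      rw [swap01, dif_pos (by omega)]
      exact Equiv.swap_apply_of_ne_of_ne (by simp [Fin.ext_iff]; omega)
        (by simp [Fin.ext_iff]; omega)
  rw [cPerm_apply]
  simp only [hfix]
  have h0 : 0 < l - i := by omega
  simp [sigmaTildeFun, sh.first h0]

theorem cPerm_injective {k : ℕ} (hk : 1 ≤ k) (l : ℕ) : Function.Injective (cPerm k l) := by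
  rintro ⟨⟨i, hi⟩, sh⟩ ⟨⟨i', hi'⟩, sh'⟩ h
  obtain rfl : i = i' := by
    have hpivot := cPerm_apply_pivot hk hi sh
    rw [h] at hpivot
    have := (cPerm k l _).injective (hpivot.trans (cPerm_apply_pivot hk hi' sh').symm)
    simpa using this
  have hσ : sigmaTildeFun k l i hi sh = sigmaTildeFun k l i hi sh' := funext fun x => by
    simpa [cPerm_apply] using congrArg (fun σ => σ ((swap01 (k + l) ^ i).symm x)) h
  have hwords := ofFn_val_sigmaTildeFun_natAdd (k := k) hi sh
  rw [hσ, ofFn_val_sigmaTildeFun_natAdd,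
    (List.map_injective_iff.mpr (add_right_injective k)).eq_iff] at hwords
  obtain ⟨hβ, hα⟩ := List.append_inj hwords (by simp)
  rw [Shuffle1.ext_list hα.symm (List.reverse_injective hβ).symm]

theorem CsetIndex.mask_injective (m : ℕ) :
    Function.Injective fun t : CsetIndex (m + 1) => t.2.mask m := by
  rintro ⟨i, sh⟩ ⟨i', sh'⟩ (h : sh.mask m = sh'.mask m)
  have hs : ∀ j : Fin (m + 1), 0 < m + 1 - j := fun j => by omega
  have hst : ∀ j : Fin (m + 1), m + 1 - j + j = m + 1 := fun j => by omega
  obtain rfl : i = i' := Fin.ext <| by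
    rw [← sh.length_filter_mask (hs i) (hst i), h, sh'.length_filter_mask (hs i') (hst i')]
  obtain rfl : sh = sh' := Shuffle1.ext_list
    (by rw [sh.αList_eq_map_filter_mask (hs i) (hst i), h,
      sh'.αList_eq_map_filter_mask (hs i) (hst i)])
    (by rw [sh.βList_eq_map_filter_mask (hs i) (hst i), h,
      sh'.βList_eq_map_filter_mask (hs i) (hst i)])
  rfl

theorem CsetIndex.mask_surjective (m : ℕ) :
    Function.Surjective fun t : CsetIndex (m + 1) => t.2.mask m := by
  intro g
  set B := ((List.finRange m).filter g).map (·.val + 1)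
  set A := 0 :: ((List.finRange m).filter (!g ·)).map (·.val + 1)
  have hB : B.length ≤ m := by simpa [B] using List.length_filter_le g (List.finRange m)
  have hA : A.length = m + 1 - B.length := by
    have := (List.finRange m).length_eq_length_filter_add g
    simp only [List.length_finRange] at this
    simp [A, B]
    omega
  have hAB : A.Disjoint B := by
    intro x hxA hxB
    obtain ⟨j, hj, rfl⟩ := List.mem_map.mp hxB
    simp only [A, List.mem_cons, List.mem_map, List.mem_filter, List.mem_finRange, true_and,
      Bool.not_eq_true'] at hxA
    obtain h0 | ⟨j', hj', he⟩ := hxA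
    · omega
    · obtain rfl : j' = j := Fin.ext (by omega)
      simp_all
  have hlt : ∀ x ∈ A ++ B, x < m + 1 - B.length + B.length := by
    simp only [A, B, List.mem_append, List.mem_cons, List.mem_map]
    rintro x ((rfl | ⟨j, -, rfl⟩) | ⟨j, -, rfl⟩) <;> omega
  obtain ⟨sh, -, hβ⟩ := Shuffle1.exists_αList_βList_eq hA rfl
    (List.pairwise_cons.mpr ⟨by simp, List.pairwise_lt_map_succ_filter_finRange _⟩)
    (List.pairwise_lt_map_succ_filter_finRange g) hAB hlt (fun _ => rfl)
  refine ⟨⟨⟨B.length, by omega⟩, sh⟩, funext fun j => ?_⟩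
  simp [Shuffle1.mask_apply, hβ, B, Fin.val_inj]

theorem lieWord_cPerm {L : Type*} [LieRing L] {k m : ℕ} (hk : 1 ≤ k) (t : CsetIndex (m + 1))
    (v : Fin (k + (m + 1)) → L) :
    lieWord (List.ofFn fun p => v (cPerm k (m + 1) t p)) =
      (-1 : ℤ) ^ ((List.finRange m).filter (t.2.mask m)).length •
        lieFold (lieWord (List.ofFn fun j : Fin k => v (Fin.castAdd (m + 1) j)))
          (maskWord (fun j : Fin m => v (Fin.natAdd k j.succ)) (v (Fin.natAdd k 0))
            (t.2.mask m)) := by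
  obtain ⟨⟨i, hi⟩, sh⟩ := t
  simp only [cPerm_apply]
  rw [lieWord_ofFn_comp_swap01_pow (by omega) (fun p => v (sigmaTildeFun k (m + 1) i hi sh p)),
    sh.length_filter_mask (m := m) (by omega) (by omega), List.ofFn_add,
    lieWord_append (by simp; omega)]
  congr 3
  · exact List.ofFn_inj.mpr (funext fun j => congrArg v (sigmaTildeFun_castAdd hi sh j))
  · rw [← Function.comp_def v, ← List.map_ofFn, ofFn_sigmaTildeFun_natAdd, map_maskWord]
    rfl

/-- For `k, l ≥ 1` the equation
`[[x₁,…,x_k],[x_{k+1},…,x_{k+l}]] = ∑_{σ ∈ C_{k,l}} [x_{σ(1)},…,x_{σ(k+l)}]`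
holds in the free associative ring `ℤ⟨x₁,…,x_{k+l}⟩` with commutator bracket. -/
theorem bracket_bracket_eq_sum_Cset (k l : ℕ) (hk : 1 ≤ k) (hl : 1 ≤ l) :
    ⁅lieWord (List.ofFn fun j : Fin k => FreeAlgebra.ι ℤ (Fin.castAdd l j)),
      lieWord (List.ofFn fun j : Fin l => FreeAlgebra.ι ℤ (Fin.natAdd k j))⁆ =
      ∑ᶠ σ ∈ Cset k l, lieWord (List.ofFn fun i => FreeAlgebra.ι ℤ (σ i)) := by
  obtain ⟨m, rfl⟩ : ∃ m, l = m + 1 := ⟨l - 1, by omega⟩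
  have : Fintype (CsetIndex (m + 1)) := Fintype.ofFinite _
  rw [Cset_eq_range, finsum_mem_range (cPerm_injective hk _), finsum_eq_sum_of_fintype,
    List.ofFn_succ, lieWord_cons, lie_lieFold_eq_sum]
  exact (Fintype.sum_bijective _ ⟨CsetIndex.mask_injective m, CsetIndex.mask_surjective m⟩ _ _
    fun t => lieWord_cPerm hk t _).symm
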